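/- arXiv:1801.03348 — 7 statements merged into one kernel-verified Lean document; each statement's English description precedes it below -/
import Mathlib

section
/- Let ω be a disk with boundary circle Γ, and let A, B, C be points on Γ such that the arc AC is a sub-arc of the arc AB (traversed in the same direction from A). Let ω₁ be the disk centered at the midpoint of arc AB passing through A and B, and ω₂ the disk centered at the midpoint of arc AC passing through A and C. Then ω ∩ ω₂ ⊆ ω ∩ ω₁, and every point of ω ∩ ω₂ other than A lies in the interior of ω₁. -/
/-!
Write `A` for the point at angle `a` and `M_φ` for the point at angle `a + φ`. For a unit vector
`u`, `dist P (O + r u)² - dist (O + r u) A² = ‖P - O‖² - r² - 2r⟪P - A, u⟫`, so `P` lies in the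
side disk centred at `M_φ` iff `h φ := X cos φ + Y sin φ + k ≥ 0`, where `k = r² - ‖P - O‖²` and
`X, Y` are `2r` times the coordinates of `P - A` along the directions `a`, `a + π/2`. Here
`k ≥ 0` because `P ∈ ω`, and `X + k = -‖P - A‖² < 0`. For `0 < γ < α < π` one has
`sin α · h γ - sin γ · h α = 2 sin δ (X cos δ + k cos σ) ≤ 2 sin δ cos δ (X + k) < 0`
with `δ = (α - γ)/2`, `σ = (α + γ)/2`, so `h γ ≥ 0` forces `h α > 0`.
-/

open EuclideanGeometry Metric Real

/-- The point at angle `θ` on the circle centered at `O` with radius `r`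
in the Euclidean plane. -/
noncomputable def circlePt (O : EuclideanSpace ℝ (Fin 2)) (r θ : ℝ) :
    EuclideanSpace ℝ (Fin 2) :=
  O + r • (WithLp.equiv 2 (Fin 2 → ℝ)).symm ![Real.cos θ, Real.sin θ]

/-- The side disk of the arc from angle `a` to angle `b` (traversed in increasing angle)
of the circle centered at `O` with radius `r`: the closed disk centered at the midpoint
of the arc whose boundary passes through the two endpoints of the arc. -/
noncomputable def sideDisk (O : EuclideanSpace ℝ (Fin 2)) (r a b : ℝ) :
    Set (EuclideanSpace ℝ (Fin 2)) :=
  Metric.closedBall (circlePt O r ((a + b) / 2))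
    (dist (circlePt O r ((a + b) / 2)) (circlePt O r a))

/-- The boundary circle of the side disk of the arc from angle `a` to angle `b`. -/
noncomputable def sideCircle (O : EuclideanSpace ℝ (Fin 2)) (r a b : ℝ) :
    Set (EuclideanSpace ℝ (Fin 2)) :=
  Metric.sphere (circlePt O r ((a + b) / 2))
    (dist (circlePt O r ((a + b) / 2)) (circlePt O r a))

theorem cos_mul_add_sin_mul_add_pos {X Y k γ α : ℝ} (hk : 0 ≤ k) (hXk : X + k < 0)
    (hγ : 0 < γ) (hγα : γ < α) (hα : α < π) (h : 0 ≤ X * cos γ + Y * sin γ + k) :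
    0 < X * cos α + Y * sin α + k := by
  set δ := (α - γ) / 2
  set σ := (α + γ) / 2
  have hαδ : α = σ + δ := by ring
  have hγδ : γ = σ - δ := by ring
  have hsinδ : 0 < sin δ := sin_pos_of_pos_of_lt_pi (by linarith) (by linarith)
  have hcosδ : 0 < cos δ := cos_pos_of_mem_Ioo ⟨by linarith, by linarith⟩
  have hcosσ : cos σ ≤ cos δ := cos_le_cos_of_nonneg_of_le_pi (by linarith) (by linarith)
    (by linarith)
  have hsinγ : 0 < sin γ := sin_pos_of_pos_of_lt_pi hγ (by linarith)
  have hsinα : 0 < sin α := sin_pos_of_pos_of_lt_pi (by linarith) hα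
  have hidentity : sin α * (X * cos γ + Y * sin γ + k) - sin γ * (X * cos α + Y * sin α + k)
      = 2 * sin δ * (X * cos δ + k * cos σ) := by
    rw [hαδ, hγδ, sin_add, cos_add, sin_sub, cos_sub]
    linear_combination (2 * X * sin δ * cos δ) * sin_sq_add_cos_sq σ
  have hneg : X * cos δ + k * cos σ < 0 := by
    linarith [mul_le_mul_of_nonneg_left hcosσ hk, mul_neg_of_neg_of_pos hXk hcosδ]
  have hprod : 0 < sin γ * (X * cos α + Y * sin α + k) := by
    linarith [mul_nonneg hsinα.le h, mul_neg_of_pos_of_neg (mul_pos two_pos hsinδ) hneg]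
  exact pos_of_mul_pos_right hprod hsinγ.le

section InnerProductSpace

variable {V : Type*} [NormedAddCommGroup V] [InnerProductSpace ℝ V]

theorem dist_sq_sub_dist_sq_eq_of_norm_eq_one {e u : V} (O P : V) (r : ℝ) (he : ‖e‖ = 1)
    (hu : ‖u‖ = 1) :
    dist P (O + r • u) ^ 2 - dist (O + r • u) (O + r • e) ^ 2
      = dist P O ^ 2 - r ^ 2 - 2 * r * inner ℝ (P - (O + r • e)) u := by
  have hPu : P - (O + r • u) = (P - O) - r • u := by abel
  have hue : O + r • u - (O + r • e) = r • u - r • e := by abel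
  have hPe : P - (O + r • e) = (P - O) - r • e := by abel
  rw [dist_eq_norm, dist_eq_norm, dist_eq_norm, hPu, hue, hPe]
  generalize P - O = v
  simp only [norm_sub_sq_real, inner_sub_left, real_inner_smul_left,
    real_inner_smul_right, norm_smul, he, hu, norm_eq_abs, real_inner_comm e u]
  ring_nf
  rw [sq_abs]
  ring

end InnerProductSpace

noncomputable def circleDir (θ : ℝ) : EuclideanSpace ℝ (Fin 2) :=
  (WithLp.equiv 2 (Fin 2 → ℝ)).symm ![cos θ, sin θ]

theorem circlePt_eq_add_smul (O : EuclideanSpace ℝ (Fin 2)) (r θ : ℝ) :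
    circlePt O r θ = O + r • circleDir θ :=
  rfl

theorem norm_circleDir (θ : ℝ) : ‖circleDir θ‖ = 1 := by
  rw [EuclideanSpace.norm_eq, Fin.sum_univ_two]
  simp [circleDir, cos_sq_add_sin_sq]

theorem inner_circleDir_add (w : EuclideanSpace ℝ (Fin 2)) (a φ : ℝ) :
    inner ℝ w (circleDir (a + φ))
      = inner ℝ w (circleDir a) * cos φ + inner ℝ w (circleDir (a + π / 2)) * sin φ := by
  simp only [circleDir, EuclideanSpace.inner_eq_star_dotProduct, dotProduct, Fin.sum_univ_two]
  simp [cos_add, sin_add]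
  ring

theorem dist_circlePt_lt_of_dist_le {O P : EuclideanSpace ℝ (Fin 2)} {r a γ α : ℝ}
    (hP : dist P O ≤ r) (hPA : P ≠ circlePt O r a) (hγ : 0 < γ) (hγα : γ < α) (hα : α < π)
    (h : dist P (circlePt O r (a + γ)) ≤ dist (circlePt O r (a + γ)) (circlePt O r a)) :
    dist P (circlePt O r (a + α)) < dist (circlePt O r (a + α)) (circlePt O r a) := by
  simp only [circlePt_eq_add_smul] at *
  set w := P - (O + r • circleDir a)
  have hside (φ : ℝ) :
      dist P (O + r • circleDir (a + φ)) ^ 2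
        - dist (O + r • circleDir (a + φ)) (O + r • circleDir a) ^ 2
      = dist P O ^ 2 - r ^ 2 - 2 * r * (inner ℝ w (circleDir a) * cos φ
        + inner ℝ w (circleDir (a + π / 2)) * sin φ) := by
    rw [← inner_circleDir_add]
    exact dist_sq_sub_dist_sq_eq_of_norm_eq_one O P r (norm_circleDir a) (norm_circleDir _)
  have hdistA : dist P (O + r • circleDir a) ^ 2
      = dist P O ^ 2 - r ^ 2 - 2 * r * inner ℝ w (circleDir a) := by
    simpa using hside 0
  have hk : 0 ≤ r ^ 2 - dist P O ^ 2 := by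
    linarith [pow_le_pow_left₀ dist_nonneg hP 2]
  have hXk : 2 * r * inner ℝ w (circleDir a) + (r ^ 2 - dist P O ^ 2) < 0 := by
    linarith [pow_pos (dist_pos.2 hPA) 2]
  have hγ' := pow_le_pow_left₀ dist_nonneg h 2
  have hα' := cos_mul_add_sin_mul_add_pos (Y := 2 * r * inner ℝ w (circleDir (a + π / 2)))
    hk hXk hγ hγα hα (by linarith [hside γ])
  exact (pow_lt_pow_iff_left₀ dist_nonneg dist_nonneg two_ne_zero).1 (by linarith [hside α])

theorem stmt_0_general (O : EuclideanSpace ℝ (Fin 2)) (r a b c : ℝ)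
    (hac : a < c) (hcb : c < b) (hb : b < a + 2 * π) :
    Metric.closedBall O r ∩ sideDisk O r a c ⊆ Metric.closedBall O r ∩ sideDisk O r a b ∧
    ∀ P ∈ Metric.closedBall O r ∩ sideDisk O r a c, P ≠ circlePt O r a →
      P ∈ interior (sideDisk O r a b) := by
  have hinner : ∀ P ∈ closedBall O r ∩ sideDisk O r a c, P ≠ circlePt O r a →
      P ∈ ball (circlePt O r ((a + b) / 2)) (dist (circlePt O r ((a + b) / 2)) (circlePt O r a)) := by
    rintro P ⟨hω, hω₂⟩ hPA
    rw [mem_ball, show (a + b) / 2 = a + (b - a) / 2 by ring]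
    refine dist_circlePt_lt_of_dist_le (mem_closedBall.1 hω) hPA (γ := (c - a) / 2)
      (by linarith) (by linarith) (by linarith) ?_
    rwa [show a + (c - a) / 2 = (a + c) / 2 by ring]
  refine ⟨fun P hP => ⟨hP.1, ?_⟩, fun P hP hPA => ball_subset_interior_closedBall (hinner P hP hPA)⟩
  by_cases hPA : P = circlePt O r a
  · rw [hPA, sideDisk, mem_closedBall, dist_comm]
  · exact ball_subset_closedBall (hinner P hP hPA)

/-- Lemma 1: if arc `AC` is a sub-arc of arc `AB`, then `ω ∩ ω₂ ⊆ ω ∩ ω₁`, and every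
point of `ω ∩ ω₂` other than `A` lies in the interior of `ω₁`. -/
theorem stmt_0 (O : EuclideanSpace ℝ (Fin 2)) (r a b c : ℝ) (hr : 0 < r)
    (hac : a < c) (hcb : c < b) (hb : b < a + 2 * π) :
    Metric.closedBall O r ∩ sideDisk O r a c ⊆ Metric.closedBall O r ∩ sideDisk O r a b ∧
    ∀ P ∈ Metric.closedBall O r ∩ sideDisk O r a c, P ≠ circlePt O r a →
      P ∈ interior (sideDisk O r a b) :=
  stmt_0_general O r a b c hac hcb hb
end

section
/- Let Γ be a circle and A, D points on Γ. Let W be the midpoint of the arc AD (one of the two arcs), F another point on Γ on the arc DA not containing W (specifically, the midpoint of some arc DC). Let ω_F and ω_W be the circles centered at F and W respectively both passing through D, and let X be their second intersection point (other than D). Then F, X, and A are collinear. -/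
/-!
Identify the plane with `ℂ` so that `Γ` becomes the unit circle. The circles centred at `W` and
`F` through `D` meet again at the reflection `x = w + f - w f / d` of `D` in the chord `WF`.
As `W` is the midpoint of an arc `AD`, `w ^ 2 = a d`, and then
`(a - f) / (x - f) = (w ^ 2 - f d) / (w (d - f))` is fixed by complex conjugation (which is
inversion on the unit circle), so it is real and `A` lies on the line `FX`.
-/

open EuclideanGeometry Metric Real

open Complex ComplexConjugate

theorem Collinear.map {k V₁ V₂ P₁ P₂ : Type*} [DivisionRing k] [AddCommGroup V₁] [Module k V₁]
    [AddTorsor V₁ P₁] [AddCommGroup V₂] [Module k V₂] [AddTorsor V₂ P₂] {s : Set P₁}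
    (h : Collinear k s) (f : P₁ →ᵃ[k] P₂) : Collinear k (f '' s) := by
  rw [Collinear, ← AffineMap.map_vectorSpan, ← Cardinal.lift_le_one_iff]
  exact (lift_rank_map_le f.linear _).trans (Cardinal.lift_le_one_iff.2 h)

/-- The reflection of `d` in the line through `w` and `f`, when the three points lie on a circle
centred at `0`. -/
noncomputable def chordReflection (w f d : ℂ) : ℂ := w + f - w * f / d

section chordReflection

variable {w f d x a : ℂ}

theorem chordReflection_comm (w f d : ℂ) : chordReflection w f d = chordReflection f w d := by
  unfold chordReflection; ring

theorem dist_chordReflection_right (hw : ‖w‖ = ‖d‖) (hd : d ≠ 0) :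
    dist (chordReflection w f d) f = dist d f := by
  have h : chordReflection w f d - f = w / d * (d - f) := by
    unfold chordReflection; field_simp; ring
  rw [dist_eq_norm, h, norm_mul, norm_div, hw, div_self (norm_ne_zero_iff.2 hd), one_mul,
    ← dist_eq_norm]

theorem dist_chordReflection_left (hf : ‖f‖ = ‖d‖) (hd : d ≠ 0) :
    dist (chordReflection w f d) w = dist d w := by
  rw [chordReflection_comm]
  exact dist_chordReflection_right hf hd

theorem chordReflection_ne_self (hd : d ≠ 0) (hwd : w ≠ d) (hfd : f ≠ d) :
    chordReflection w f d ≠ d := by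
  have h : chordReflection w f d - d = -((w - d) * (f - d) / d) := by
    unfold chordReflection; field_simp; ring
  rw [← sub_ne_zero, h, neg_ne_zero]
  exact div_ne_zero (mul_ne_zero (sub_ne_zero.2 hwd) (sub_ne_zero.2 hfd)) hd

theorem eq_chordReflection_of_dist_eq (hw : ‖w‖ = ‖d‖) (hf : ‖f‖ = ‖d‖) (hd : d ≠ 0)
    (hwf : w ≠ f) (hwd : w ≠ d) (hfd : f ≠ d) (hxf : dist x f = dist d f)
    (hxw : dist x w = dist d w) (hxd : x ≠ d) : x = chordReflection w f d :=
  (eq_of_dist_eq_of_dist_eq_of_finrank_eq_two finrank_real_complex hwf.symm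
    (chordReflection_ne_self hd hwd hfd).symm rfl (dist_chordReflection_right hw hd) hxf
    rfl (dist_chordReflection_left hf hd) hxw).resolve_left hxd

theorem collinear_chordReflection (hw : ‖w‖ = 1) (hf : ‖f‖ = 1) (hd : ‖d‖ = 1)
    (ha : w ^ 2 = a * d) : Collinear ℝ {f, chordReflection w f d, a} := by
  have hd0 : d ≠ 0 := norm_ne_zero_iff.1 (by simp [hd])
  have hw0 : w ≠ 0 := norm_ne_zero_iff.1 (by simp [hw])
  have hf0 : f ≠ 0 := norm_ne_zero_iff.1 (by simp [hf])
  obtain rfl : a = w ^ 2 / d := eq_div_of_mul_eq hd0 ha.symm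
  rcases eq_or_ne f d with rfl | hfd
  · simp [chordReflection, hf0, collinear_pair]
  set x := chordReflection w f d
  have hx : x - f = w * (d - f) / d := by
    simp only [x, chordReflection]; field_simp; ring
  have hxf : x - f ≠ 0 := by
    rw [hx]; exact div_ne_zero (mul_ne_zero hw0 (sub_ne_zero.2 hfd.symm)) hd0
  set t := (w ^ 2 / d - f) / (x - f)
  have ht : conj t = t := by
    simp only [t, hx, map_div₀, map_sub, map_mul, map_pow, ← inv_eq_conj hw, ← inv_eq_conj hf,
      ← inv_eq_conj hd]
    field_simp
    ring
  refine collinear_triple_of_mem_affineSpan_pair (left_mem_affineSpan_pair ℝ f x)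
    (right_mem_affineSpan_pair ℝ f x) ?_
  convert AffineMap.lineMap_mem_affineSpan_pair t.re f x
  rw [AffineMap.lineMap_apply, vsub_eq_sub, vadd_eq_add, real_smul, conj_eq_iff_re.1 ht,
    div_mul_cancel₀ _ hxf, sub_add_cancel]

end chordReflection

theorem Circle.coe_exp_ne_coe_exp_of_lt {x y : ℝ} (hxy : x < y) (hyx : y < x + 2 * π) :
    (Circle.exp x : ℂ) ≠ Circle.exp y := fun h ↦
  hxy.ne <| Circle.exp_injOn_Ico (a := x) (b := x + 2 * π) (by simp)
    ⟨le_rfl, by linarith⟩ ⟨hxy.le, hyx⟩ (Circle.coe_inj.1 h)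

theorem Circle.coe_exp_add_div_two_sq (x y : ℝ) :
    (Circle.exp ((x + y) / 2) : ℂ) ^ 2 = Circle.exp x * Circle.exp y := by
  rw [sq, ← Circle.coe_mul, ← Circle.coe_mul, ← Circle.exp_add, ← Circle.exp_add, add_halves]

noncomputable def circleChart (O : EuclideanSpace ℝ (Fin 2)) (r : ℝ) :
    ℂ →ᵃ[ℝ] EuclideanSpace ℝ (Fin 2) :=
  (r • orthonormalBasisOneI.repr.toLinearMap).toAffineMap + AffineMap.const ℝ ℂ O

section circleChart

variable (O : EuclideanSpace ℝ (Fin 2)) (r : ℝ)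

theorem circleChart_apply (z : ℂ) :
    circleChart O r z = O + r • orthonormalBasisOneI.repr z := by
  simp [circleChart, add_comm]

theorem circleChart_exp (θ : ℝ) : circleChart O r (Circle.exp θ) = circlePt O r θ := by
  rw [circleChart_apply, circlePt]
  congr 2
  ext i
  fin_cases i <;> simp [Circle.coe_exp, exp_ofReal_mul_I_re, exp_ofReal_mul_I_im]

theorem dist_circleChart (z z' : ℂ) :
    dist (circleChart O r z) (circleChart O r z') = |r| * dist z z' := by
  simp only [circleChart_apply, dist_add_left, dist_smul₀, Real.norm_eq_abs,
    LinearIsometryEquiv.dist_map]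

theorem circleChart_surjective (hr : r ≠ 0) : Function.Surjective (circleChart O r) := fun p ↦
  ⟨orthonormalBasisOneI.repr.symm (r⁻¹ • (p - O)), by
    rw [circleChart_apply, LinearIsometryEquiv.apply_symm_apply, smul_inv_smul₀ hr,
      add_sub_cancel]⟩

end circleChart

/-- With `A`, `D`, `C` in cyclic order on the circle, `W` the midpoint of arc `AD` and
`F` the midpoint of arc `DC`, if `X` is the second intersection point of the circle centered
at `F` through `D` and the circle centered at `W` through `D`, then `F`, `X`, `A` are
collinear. -/
theorem stmt_3 (O : EuclideanSpace ℝ (Fin 2)) (r a d c : ℝ) (hr : 0 < r)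
    (had : a < d) (hdc : d < c) (hca : c < a + 2 * π)
    (X : EuclideanSpace ℝ (Fin 2))
    (hXF : X ∈ Metric.sphere (circlePt O r ((d + c) / 2))
      (dist (circlePt O r ((d + c) / 2)) (circlePt O r d)))
    (hXW : X ∈ Metric.sphere (circlePt O r ((a + d) / 2))
      (dist (circlePt O r ((a + d) / 2)) (circlePt O r d)))
    (hXD : X ≠ circlePt O r d) :
    Collinear ℝ {circlePt O r ((d + c) / 2), X, circlePt O r a} := by
  obtain ⟨x, rfl⟩ := circleChart_surjective O r hr.ne' X
  have hr' : |r| ≠ 0 := abs_ne_zero.2 hr.ne'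
  rw [Metric.mem_sphere, ← circleChart_exp, ← circleChart_exp, dist_circleChart, dist_circleChart,
    mul_right_inj' hr', dist_comm (Circle.exp _ : ℂ)] at hXF hXW
  have hxd : x ≠ Circle.exp d := by rintro rfl; exact hXD (circleChart_exp O r d)
  have hx := eq_chordReflection_of_dist_eq (by simp only [Circle.norm_coe])
    (by simp only [Circle.norm_coe]) (Circle.coe_ne_zero _)
    (Circle.coe_exp_ne_coe_exp_of_lt (by linarith) (by linarith))
    (Circle.coe_exp_ne_coe_exp_of_lt (by linarith) (by linarith))
    (Circle.coe_exp_ne_coe_exp_of_lt (by linarith) (by linarith)).symm hXF hXW hxd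
  rw [← circleChart_exp, ← circleChart_exp, ← Set.image_pair, ← Set.image_insert_eq, hx]
  exact (collinear_chordReflection (Circle.norm_coe _) (Circle.norm_coe _) (Circle.norm_coe _)
    (Circle.coe_exp_add_div_two_sq a d)).map _
end

section
/- Let A, B, C, D be four points on a circle in this cyclic order, and let X, Y, Z, T be the incenters of triangles ADC, DCB, CBA, and BAD respectively. Then the quadrilateral XYZT is a rectangle. -/
/-!
Put the circle at the origin with radius one and write the vertex at angle `θ` as `e(θ)`.
For `α < β < γ < α + 2π`, the incenter of the triangle `e(α) e(β) e(γ)` is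
`e((α+β)/2) + e((β+γ)/2) - e((α+γ)/2)`, the sum of the midpoints of the three arcs cut off
by the sides (the last one is `e((α+γ)/2 + π)`): it lies on the bisector at `e(α)`, which is
normal to `e((2α+β+γ)/4)`, and on the one at `e(β)`, and these two bisectors are not
parallel.
In complex notation, with vertices `x², y², z², w²` (`x = e^{ia/2}`, …) the four incenters are
`X = xz + zw - xw`, `Y = yz + zw - yw`, `Z = xy + yz - xz`, `T = xy + yw - xw`, so
`Y - X = (y - x)(z - w)` and `T - X = Z - Y = (x + w)(y - z)`. For unimodular `x, y, z, w` the
quotient of these two products is purely imaginary, so `XYZT` is a parallelogram with a right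
angle.
-/

open EuclideanGeometry Metric Real

/-- `P` is the incenter of the triangle `ABC`: it lies on the internal angle bisector
lines from all three vertices (for a nondegenerate triangle these three lines meet
only at the incenter). -/
def IsIncenter (P A B C : EuclideanSpace ℝ (Fin 2)) : Prop :=
  ∠ B A P = ∠ P A C ∧ ∠ C B P = ∠ P B A ∧ ∠ A C P = ∠ P C B

open scoped RealInnerProductSpace

lemma IsIncenter.rotate {P A B C : EuclideanSpace ℝ (Fin 2)} (h : IsIncenter P A B C) :
    IsIncenter P B C A :=
  ⟨h.2.1, h.2.2, h.1⟩

lemma IsIncenter.swap {P A B C : EuclideanSpace ℝ (Fin 2)} (h : IsIncenter P A B C) :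
    IsIncenter P A C B := by
  obtain ⟨hA, hB, hC⟩ := h
  refine ⟨?_, ?_, ?_⟩ <;> rw [angle_comm, eq_comm, angle_comm] <;> assumption

lemma InnerProductGeometry.inner_sub_eq_zero_of_angle_eq {V : Type*} [NormedAddCommGroup V]
    [InnerProductSpace ℝ V] {u v w : V} (huv : ‖u‖ = ‖v‖) (h : angle u w = angle w v) :
    ⟪w, u - v⟫ = 0 := by
  rw [inner_sub_right, real_inner_comm, ← cos_angle_mul_norm_mul_norm,
    ← cos_angle_mul_norm_mul_norm, h, huv]
  ring

lemma EuclideanGeometry.angles_eq_pi_div_two_of_vsub_eq_of_inner_eq_zero {V P : Type*}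
    [NormedAddCommGroup V] [InnerProductSpace ℝ V] [MetricSpace P] [NormedAddTorsor V P]
    {X Y Z T : P} (hpar : Z -ᵥ Y = T -ᵥ X) (hperp : ⟪Y -ᵥ X, T -ᵥ X⟫ = 0) :
    ∠ T X Y = π / 2 ∧ ∠ X Y Z = π / 2 ∧ ∠ Y Z T = π / 2 ∧ ∠ Z T X = π / 2 := by
  have hpar' : Z -ᵥ T = Y -ᵥ X := by
    rw [← vsub_add_vsub_cancel Z Y T, hpar, ← vsub_sub_vsub_cancel_right Y T X]
    abel
  simp only [EuclideanGeometry.angle,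
    ← InnerProductGeometry.inner_eq_zero_iff_angle_eq_pi_div_two]
  refine ⟨?_, ?_, ?_, ?_⟩
  · rwa [real_inner_comm]
  · rw [← neg_vsub_eq_vsub_rev Y X, hpar, inner_neg_left, hperp, neg_zero]
  · rw [← neg_vsub_eq_vsub_rev Z Y, ← neg_vsub_eq_vsub_rev Z T, hpar, hpar', inner_neg_neg,
      real_inner_comm, hperp]
  · rw [hpar', ← neg_vsub_eq_vsub_rev T X, inner_neg_right, hperp, neg_zero]

noncomputable def unitVec (θ : ℝ) : EuclideanSpace ℝ (Fin 2) :=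
  (WithLp.equiv 2 (Fin 2 → ℝ)).symm ![cos θ, sin θ]

@[simp] lemma unitVec_apply_zero (θ : ℝ) : unitVec θ 0 = cos θ := rfl

@[simp] lemma unitVec_apply_one (θ : ℝ) : unitVec θ 1 = sin θ := rfl

lemma norm_unitVec (θ : ℝ) : ‖unitVec θ‖ = 1 := by
  simp [EuclideanSpace.norm_eq, Fin.sum_univ_two]

lemma inner_unitVec_unitVec (θ φ : ℝ) : ⟪unitVec θ, unitVec φ⟫ = cos (θ - φ) := by
  simp [PiLp.inner_apply, Fin.sum_univ_two, cos_sub, mul_comm]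

lemma unitVec_add_pi (θ : ℝ) : unitVec (θ + π) = -unitVec θ := by
  ext i; fin_cases i <;> simp

lemma unitVec_sub_unitVec (s t : ℝ) :
    unitVec s - unitVec t = (2 * sin ((s - t) / 2)) • unitVec ((s + t) / 2 + π / 2) := by
  ext i; fin_cases i <;> simp [cos_sub_cos, sin_sub_sin, cos_add_pi_div_two, sin_add_pi_div_two]
  ring

lemma eq_zero_of_inner_unitVec_eq_zero {v : EuclideanSpace ℝ (Fin 2)} {θ φ : ℝ}
    (hθ : ⟪v, unitVec θ⟫ = 0) (hφ : ⟪v, unitVec φ⟫ = 0) (h : sin (θ - φ) ≠ 0) :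
    v = 0 := by
  simp only [PiLp.inner_apply, Fin.sum_univ_two, unitVec_apply_zero, unitVec_apply_one,
    RCLike.inner_apply, conj_trivial] at hθ hφ
  ext i; fin_cases i
  · have h₀ : v 0 * sin (θ - φ) = 0 := by
      rw [sin_sub]; linear_combination sin θ * hφ - sin φ * hθ
    exact (mul_eq_zero.mp h₀).resolve_right h
  · have h₁ : v 1 * sin (θ - φ) = 0 := by
      rw [sin_sub]; linear_combination cos φ * hθ - cos θ * hφ
    exact (mul_eq_zero.mp h₁).resolve_right h

section Circle

variable (O : EuclideanSpace ℝ (Fin 2)) (r : ℝ)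

lemma circlePt_eq (θ : ℝ) : circlePt O r θ = O + r • unitVec θ := rfl

lemma circlePt_add_two_pi (θ : ℝ) : circlePt O r (θ + 2 * π) = circlePt O r θ := by
  simp [circlePt_eq, unitVec]

lemma circlePt_sub_circlePt (θ φ : ℝ) :
    circlePt O r φ - circlePt O r θ =
      (2 * r * sin ((φ - θ) / 2)) • unitVec ((θ + φ) / 2 + π / 2) := by
  rw [circlePt_eq, circlePt_eq, add_sub_add_left_eq_sub, ← smul_sub, unitVec_sub_unitVec,
    smul_smul, add_comm φ]
  ring_nf

lemma inner_sub_circlePt_unitVec_eq_zero_of_angle_eq {α β γ : ℝ}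
    {P : EuclideanSpace ℝ (Fin 2)} (hr : 0 < r) (hαβ : α < β) (hβγ : β < γ)
    (hγα : γ < α + 2 * π)
    (h : ∠ (circlePt O r β) (circlePt O r α) P = ∠ P (circlePt O r α) (circlePt O r γ)) :
    ⟪P - circlePt O r α, unitVec ((2 * α + β + γ) / 4)⟫ = 0 := by
  have hpos : ∀ θ, α < θ → θ < α + 2 * π → 0 < 2 * r * sin ((θ - α) / 2) :=
    fun θ h₁ h₂ =>
      mul_pos (by positivity) (sin_pos_of_pos_of_lt_pi (by linarith) (by linarith))
  simp only [EuclideanGeometry.angle, vsub_eq_sub, circlePt_sub_circlePt] at h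
  rw [InnerProductGeometry.angle_smul_left_of_pos _ _ (hpos β hαβ (by linarith)),
    InnerProductGeometry.angle_smul_right_of_pos _ _ (hpos γ (by linarith) hγα)] at h
  have hperp := InnerProductGeometry.inner_sub_eq_zero_of_angle_eq
    (by rw [norm_unitVec, norm_unitVec]) h
  rw [unitVec_sub_unitVec, inner_smul_right,
    show ((α + β) / 2 + π / 2 - ((α + γ) / 2 + π / 2)) / 2 = -((γ - β) / 4) by ring,
    show ((α + β) / 2 + π / 2 + ((α + γ) / 2 + π / 2)) / 2 + π / 2 =
      (2 * α + β + γ) / 4 + π by ring,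
    unitVec_add_pi, inner_neg_right, sin_neg] at hperp
  have hsin : sin ((γ - β) / 4) ≠ 0 := (sin_pos_of_pos_of_lt_pi (by linarith) (by linarith)).ne'
  simpa [hsin] using hperp

noncomputable def circleIncenter (α β γ : ℝ) : EuclideanSpace ℝ (Fin 2) :=
  O + r • (unitVec ((α + β) / 2) + unitVec ((β + γ) / 2) - unitVec ((α + γ) / 2))

lemma circleIncenter_rotate (α β γ : ℝ) :
    circleIncenter O r β γ (α + 2 * π) = circleIncenter O r α β γ := by
  rw [circleIncenter, circleIncenter, show (γ + (α + 2 * π)) / 2 = (α + γ) / 2 + π by ring,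
    show (β + (α + 2 * π)) / 2 = (α + β) / 2 + π by ring, unitVec_add_pi, unitVec_add_pi]
  module

lemma inner_circleIncenter_sub_circlePt (α β γ : ℝ) :
    ⟪circleIncenter O r α β γ - circlePt O r α, unitVec ((2 * α + β + γ) / 4)⟫ = 0 := by
  rw [circleIncenter, circlePt_eq, add_sub_add_left_eq_sub, ← smul_sub, inner_smul_left]
  simp only [inner_sub_left, inner_add_left, inner_unitVec_unitVec]
  rw [show (α + β) / 2 - (2 * α + β + γ) / 4 = -((α + γ) / 2 - (2 * α + β + γ) / 4) by
      ring,
    show α - (2 * α + β + γ) / 4 = -((β + γ) / 2 - (2 * α + β + γ) / 4) by ring,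
    cos_neg, cos_neg]
  ring

lemma IsIncenter.eq_circleIncenter {α β γ : ℝ} {P : EuclideanSpace ℝ (Fin 2)} (hr : 0 < r)
    (hαβ : α < β) (hβγ : β < γ) (hγα : γ < α + 2 * π)
    (hP : IsIncenter P (circlePt O r α) (circlePt O r β) (circlePt O r γ)) :
    P = circleIncenter O r α β γ := by
  have hA := inner_sub_circlePt_unitVec_eq_zero_of_angle_eq O r hr hαβ hβγ hγα hP.1
  have hB := inner_sub_circlePt_unitVec_eq_zero_of_angle_eq O r hr hβγ hγα (by linarith)
    (by rw [circlePt_add_two_pi]; exact hP.2.1)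
  rw [← sub_eq_zero]
  refine eq_zero_of_inner_unitVec_eq_zero (θ := (2 * α + β + γ) / 4)
    (φ := (2 * β + γ + (α + 2 * π)) / 4) ?_ ?_ ?_
  · rw [← sub_sub_sub_cancel_right _ _ (circlePt O r α), inner_sub_left, hA,
      inner_circleIncenter_sub_circlePt, sub_zero]
  · rw [← sub_sub_sub_cancel_right _ _ (circlePt O r β), inner_sub_left, hB,
      ← circleIncenter_rotate, inner_circleIncenter_sub_circlePt, sub_zero]
  · rw [show (2 * α + β + γ) / 4 - (2 * β + γ + (α + 2 * π)) / 4 =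
        -((β - α) / 4 + π / 2) by ring,
      sin_neg, sin_add_pi_div_two, neg_ne_zero]
    exact (cos_pos_of_mem_Ioo ⟨by linarith, by linarith⟩).ne'

lemma circleIncenter_sub_eq_circleIncenter_sub (a b c d : ℝ) :
    circleIncenter O r a b c - circleIncenter O r b c d =
      circleIncenter O r a b d - circleIncenter O r a c d := by
  simp only [circleIncenter]
  module

/-- After expansion, the sixteen cosines cancel in pairs `cos x`, `cos (-x)`. -/
lemma inner_circleIncenter_sub_circleIncenter (a b c d : ℝ) :
    ⟪circleIncenter O r b c d - circleIncenter O r a c d,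
      circleIncenter O r a b d - circleIncenter O r a c d⟫ = 0 := by
  simp only [circleIncenter, add_sub_add_left_eq_sub, ← smul_sub, inner_smul_left,
    inner_smul_right, inner_sub_left, inner_add_left, inner_sub_right, inner_add_right,
    inner_unitVec_unitVec]
  ring_nf
  simp only [cos_add, sin_add, neg_div, mul_neg, cos_neg, sin_neg]
  ring

end Circle

/-- If `A, B, C, D` lie in cyclic order on a circle and `X, Y, Z, T` are the incenters of
triangles `ADC`, `DCB`, `CBA`, `BAD`, then `XYZT` is a rectangle. -/
theorem stmt_5 (O : EuclideanSpace ℝ (Fin 2)) (r a b c d : ℝ) (hr : 0 < r)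
    (hab : a < b) (hbc : b < c) (hcd : c < d) (hda : d < a + 2 * π)
    (X Y Z T : EuclideanSpace ℝ (Fin 2))
    (hX : IsIncenter X (circlePt O r a) (circlePt O r d) (circlePt O r c))
    (hY : IsIncenter Y (circlePt O r d) (circlePt O r c) (circlePt O r b))
    (hZ : IsIncenter Z (circlePt O r c) (circlePt O r b) (circlePt O r a))
    (hT : IsIncenter T (circlePt O r b) (circlePt O r a) (circlePt O r d)) :
    ∠ T X Y = π / 2 ∧ ∠ X Y Z = π / 2 ∧ ∠ Y Z T = π / 2 ∧ ∠ Z T X = π / 2 := by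
  rw [hX.swap.eq_circleIncenter O r hr (by linarith) hcd (by linarith),
    hY.rotate.rotate.swap.eq_circleIncenter O r hr hbc hcd (by linarith),
    hZ.rotate.rotate.swap.eq_circleIncenter O r hr hab hbc (by linarith),
    hT.rotate.swap.eq_circleIncenter O r hr hab (by linarith) hda]
  exact angles_eq_pi_div_two_of_vsub_eq_of_inner_eq_zero
    (circleIncenter_sub_eq_circleIncenter_sub O r a b c d)
    (inner_circleIncenter_sub_circleIncenter O r a b c d)
end

section
/- Let A, B, C, D be four points on a circle in cyclic order, with side disks ω_ab, ω_bc, ω_cd, ω_da associated to the arcs AB, BC, CD, DA. Then at least one of the two pairs of 'opposite' side disks is disjoint: either ω_ab ∩ ω_cd = ∅ or ω_bc ∩ ω_da = ∅. -/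
/-!
The side disk of an arc of angular length `4α` on a circle of radius `r` has radius `2r sin α`,
and the centres of the disks of arcs `4α` and `4γ` separated by an arc `4β` are `2r sin (α + 2β + γ)`
apart. Writing the four quarter-arcs as `α = s + u`, `γ = s - u`, `β = t + v`, `δ = t - v` with
`s + t = π/4`, both pairs of opposite disks meeting would give
`sin s cos u + sin t cos v ≥ cos² u + cos² v - 1`. But `X ↦ X² - X sin s` is increasing on
`X ≥ cos s > sin s`, so the right side minus the left side strictly exceeds its value at `u = s`,
`v = t`, which is `(cos 2s + cos 2t - sin 2s - sin 2t) / 2 = 0` because `2s + 2t = π/2`.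
-/

open EuclideanGeometry Metric Real

lemma dist_circlePt (O : EuclideanSpace ℝ (Fin 2)) (r θ φ : ℝ) :
    dist (circlePt O r θ) (circlePt O r φ) = 2 * |r| * |sin ((θ - φ) / 2)| := by
  have hsq : (r * cos θ - r * cos φ) ^ 2 + (r * sin θ - r * sin φ) ^ 2
      = (2 * |r| * |sin ((θ - φ) / 2)|) ^ 2 := by
    have hcos : cos (θ - φ) = 1 - 2 * sin ((θ - φ) / 2) ^ 2 := by
      conv_lhs => rw [← mul_div_cancel₀ (θ - φ) two_ne_zero, cos_two_mul']
      linear_combination sin_sq_add_cos_sq ((θ - φ) / 2)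
    rw [mul_pow, mul_pow, sq_abs, sq_abs]
    linear_combination r ^ 2 * sin_sq_add_cos_sq θ + r ^ 2 * sin_sq_add_cos_sq φ
      + 2 * r ^ 2 * cos_sub θ φ - 2 * r ^ 2 * hcos
  rw [EuclideanSpace.dist_eq]
  simp only [circlePt, Fin.sum_univ_two, Real.dist_eq]
  simp [sq_abs, hsq, Real.sqrt_sq (by positivity : (0 : ℝ) ≤ 2 * |r| * |sin ((θ - φ) / 2)|)]

lemma sideDisk_eq_closedBall (O : EuclideanSpace ℝ (Fin 2)) (r a b : ℝ) :
    sideDisk O r a b = closedBall (circlePt O r ((a + b) / 2)) (2 * |r| * |sin ((b - a) / 4)|) := by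
  rw [sideDisk, dist_circlePt]
  ring_nf

lemma sideDisk_inter_sideDisk_eq_empty (O : EuclideanSpace ℝ (Fin 2)) {r : ℝ} (a b c d : ℝ)
    (hr : r ≠ 0) (h : |sin ((b - a) / 4)| + |sin ((d - c) / 4)| < |sin ((c + d - a - b) / 4)|) :
    sideDisk O r a b ∩ sideDisk O r c d = ∅ := by
  rw [← Set.disjoint_iff_inter_eq_empty, sideDisk_eq_closedBall, sideDisk_eq_closedBall]
  apply closedBall_disjoint_closedBall
  rw [dist_circlePt, show ((a + b) / 2 - (c + d) / 2) / 2 = -((c + d - a - b) / 4) by ring,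
    sin_neg, abs_neg]
  have : 0 < 2 * |r| := by positivity
  nlinarith

lemma cos_sq_sub_sin_mul_cos_lt {s u : ℝ} (hs : 0 < s) (hs' : s ≤ π / 4) (hu : |u| < s) :
    cos s ^ 2 - sin s * cos s < cos u ^ 2 - sin s * cos u := by
  have hcos : cos s < cos u := by
    rw [← cos_abs u]
    exact cos_lt_cos_of_nonneg_of_le_pi (abs_nonneg u) (by linarith [pi_pos]) hu
  have hsin : sin s ≤ cos s := by
    rw [← sin_pi_div_two_sub]
    exact sin_le_sin_of_le_of_le_pi_div_two (by linarith) (by linarith) (by linarith)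
  have hpos : 0 < cos s := cos_pos_of_mem_Ioo ⟨by linarith, by linarith [pi_pos]⟩
  nlinarith

lemma cos_sq_sub_sin_mul_cos_add_eq_one {s t : ℝ} (hst : s + t = π / 4) :
    cos s ^ 2 - sin s * cos s + (cos t ^ 2 - sin t * cos t) = 1 := by
  have ht : 2 * t = π / 2 - 2 * s := by linarith
  have hcos := cos_sq s
  have hcos' := cos_sq t
  rw [ht, cos_pi_div_two_sub] at hcos'
  have hsin := sin_two_mul s
  have hsin' := sin_two_mul t
  rw [ht, sin_pi_div_two_sub] at hsin'
  linear_combination hcos + hcos' + hsin / 2 + hsin' / 2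

lemma sin_add_sin_lt_sin_or {α β γ δ : ℝ} (hα : 0 < α) (hβ : 0 < β) (hγ : 0 < γ) (hδ : 0 < δ)
    (hsum : α + β + γ + δ = π / 2) :
    sin α + sin γ < sin (α + 2 * β + γ) ∨ sin β + sin δ < sin (β + 2 * γ + δ) := by
  by_contra! ⟨h₁, h₂⟩
  have hαγ : sin (α + 2 * β + γ) = 2 * cos ((β - δ) / 2) ^ 2 - 1 := by
    rw [← cos_two_mul, ← cos_pi_div_two_sub, ← cos_neg]
    congr 1; linarith
  have hβδ : sin (β + 2 * γ + δ) = 2 * cos ((α - γ) / 2) ^ 2 - 1 := by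
    rw [← cos_two_mul, ← cos_pi_div_two_sub]
    congr 1; linarith
  rw [sin_add_sin, hαγ] at h₁
  rw [sin_add_sin, hβδ] at h₂
  have hu := cos_sq_sub_sin_mul_cos_lt (s := (α + γ) / 2) (u := (α - γ) / 2) (by linarith)
    (by linarith) (abs_lt.2 ⟨by linarith, by linarith⟩)
  have hv := cos_sq_sub_sin_mul_cos_lt (s := (β + δ) / 2) (u := (β - δ) / 2) (by linarith)
    (by linarith) (abs_lt.2 ⟨by linarith, by linarith⟩)
  have hone := cos_sq_sub_sin_mul_cos_add_eq_one (s := (α + γ) / 2) (t := (β + δ) / 2)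
    (by linarith)
  linarith

/-- For `A, B, C, D` in cyclic order on a circle, at least one of the two pairs of opposite
side disks is disjoint. -/
theorem stmt_7 (O : EuclideanSpace ℝ (Fin 2)) (r a b c d : ℝ) (hr : 0 < r)
    (hab : a < b) (hbc : b < c) (hcd : c < d) (hda : d < a + 2 * π) :
    sideDisk O r a b ∩ sideDisk O r c d = ∅ ∨
    sideDisk O r b c ∩ sideDisk O r d (a + 2 * π) = ∅ := by
  have hsin_nonneg {x : ℝ} (hx : 0 < x) (hx' : x < π / 2) : |sin x| = sin x :=
    abs_of_nonneg (sin_nonneg_of_nonneg_of_le_pi hx.le (by linarith [pi_pos]))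
  rcases sin_add_sin_lt_sin_or (α := (b - a) / 4) (β := (c - b) / 4) (γ := (d - c) / 4)
    (δ := (a + 2 * π - d) / 4) (by linarith) (by linarith) (by linarith) (by linarith)
    (by ring) with h | h
  · left
    apply sideDisk_inter_sideDisk_eq_empty O a b c d hr.ne'
    rw [hsin_nonneg (by linarith) (by linarith), hsin_nonneg (by linarith) (by linarith),
      show (c + d - a - b) / 4 = (b - a) / 4 + 2 * ((c - b) / 4) + (d - c) / 4 by ring]
    exact h.trans_le (le_abs_self _)
  · right
    apply sideDisk_inter_sideDisk_eq_empty O b c d (a + 2 * π) hr.ne'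
    rw [hsin_nonneg (by linarith) (by linarith), hsin_nonneg (by linarith) (by linarith),
      show (d + (a + 2 * π) - b - c) / 4 = (c - b) / 4 + 2 * ((d - c) / 4) + (a + 2 * π - d) / 4
        by ring]
    exact h.trans_le (le_abs_self _)
end

section
/- Let Γ be a circle with n ≥ 2 marked points partitioning it into n arcs, and let ω and ω' be two side disks of this partition. Then ω and ω' intersect if and only if they intersect inside the closed disk bounded by Γ; i.e., ω ∩ ω' ≠ ∅ iff ω ∩ ω' ∩ D ≠ ∅, where D is the closed disk bounded by Γ. -/
open EuclideanGeometry Metric Real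

/-! Side disks are centred on `Γ`, hence in the convex disk `D`. If closed balls of radii `δ, ε`
around `x, y` meet, then `dist x y ≤ δ + ε`, so the point of the segment `[x, y]` at distance
`min δ (dist x y)` from `x` lies in both balls, and it lies in `D` by convexity. -/

theorem Convex.inter_closedBall_inter_closedBall_nonempty {E : Type*} [NormedAddCommGroup E]
    [NormedSpace ℝ E] {s : Set E} (hs : Convex ℝ s) {x y : E} (hx : x ∈ s) (hy : y ∈ s)
    {δ ε : ℝ} (h : (closedBall x δ ∩ closedBall y ε).Nonempty) :
    (closedBall x δ ∩ closedBall y ε ∩ s).Nonempty := by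
  obtain ⟨z, hzx, hzy⟩ := h
  have hδ : 0 ≤ δ := dist_nonneg.trans (mem_closedBall.mp hzx)
  have hε : 0 ≤ ε := dist_nonneg.trans (mem_closedBall.mp hzy)
  have hxy : dist x y ≤ δ + ε := dist_le_add_of_nonempty_closedBall_inter_closedBall ⟨z, hzx, hzy⟩
  rcases le_or_gt (dist x y) δ with hclose | hclose
  · exact ⟨y, ⟨mem_closedBall.mpr (dist_comm x y ▸ hclose), mem_closedBall_self hε⟩, hy⟩
  have hd : 0 < dist x y := hδ.trans_lt hclose
  set t := δ / dist x y with ht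
  have ht0 : 0 ≤ t := div_nonneg hδ hd.le
  have ht1 : t ≤ 1 := (div_le_one hd).mpr hclose.le
  refine ⟨AffineMap.lineMap x y t, ⟨?_, ?_⟩, hs.lineMap_mem hx hy ⟨ht0, ht1⟩⟩
  · rw [mem_closedBall, dist_lineMap_left, Real.norm_eq_abs, abs_of_nonneg ht0, ht,
      div_mul_cancel₀ _ hd.ne']
  · rw [mem_closedBall, dist_lineMap_right, Real.norm_eq_abs, abs_of_nonneg (sub_nonneg.mpr ht1),
      sub_mul, one_mul, ht, div_mul_cancel₀ _ hd.ne']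
    linarith

theorem dist_circlePt_center (O : EuclideanSpace ℝ (Fin 2)) (r t : ℝ) :
    dist (circlePt O r t) O = |r| := by
  have hunit : ‖(WithLp.equiv 2 (Fin 2 → ℝ)).symm ![Real.cos t, Real.sin t]‖ = 1 := by
    simp [EuclideanSpace.norm_eq, Fin.sum_univ_two, Real.cos_sq_add_sin_sq]
  rw [circlePt, dist_eq_norm, add_sub_cancel_left, norm_smul, hunit, mul_one, Real.norm_eq_abs]

theorem circlePt_mem_closedBall (O : EuclideanSpace ℝ (Fin 2)) {r : ℝ} (hr : 0 ≤ r) (t : ℝ) :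
    circlePt O r t ∈ closedBall O r :=
  mem_closedBall.mpr (dist_circlePt_center O r t ▸ abs_of_nonneg hr).le

theorem stmt_8_general (O : EuclideanSpace ℝ (Fin 2)) (r : ℝ) (hr : 0 < r)
    (θ : ℕ → ℝ) (i j : ℕ) :
    (sideDisk O r (θ i) (θ (i + 1)) ∩ sideDisk O r (θ j) (θ (j + 1))).Nonempty ↔
    (sideDisk O r (θ i) (θ (i + 1)) ∩ sideDisk O r (θ j) (θ (j + 1)) ∩
      Metric.closedBall O r).Nonempty :=
  ⟨(convex_closedBall O r).inter_closedBall_inter_closedBall_nonempty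
      (circlePt_mem_closedBall O hr.le _) (circlePt_mem_closedBall O hr.le _),
    fun h => h.mono Set.inter_subset_left⟩

/-- Marked points on a circle are encoded by a strictly monotone angle function
`θ : ℕ → ℝ` with `θ (m + n) = θ m + 2π` (so there are `n` marked points in cyclic order,
and the `i`-th side is the arc from `θ i` to `θ (i+1)`). Two side disks intersect iff
they intersect inside the closed disk bounded by the circle. -/
theorem stmt_8 (O : EuclideanSpace ℝ (Fin 2)) (r : ℝ) (hr : 0 < r)
    (n : ℕ) (hn : 2 ≤ n) (θ : ℕ → ℝ) (hmono : StrictMono θ)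
    (hper : ∀ m, θ (m + n) = θ m + 2 * π) (i j : ℕ) :
    (sideDisk O r (θ i) (θ (i + 1)) ∩ sideDisk O r (θ j) (θ (j + 1))).Nonempty ↔
    (sideDisk O r (θ i) (θ (i + 1)) ∩ sideDisk O r (θ j) (θ (j + 1)) ∩
      Metric.closedBall O r).Nonempty :=
  stmt_8_general O r hr θ i j
end

section
/- Let ω be a closed disk centered at F with radius r, X and Y boundary points of ω with |XY| strictly less than the diameter 2r, M the midpoint of segment XY, and N the point where the ray from F through M meets the boundary circle beyond M. Then for any point E on that ray on the far side of M from F with ∠XEY ≤ π/2, one has |ME| > |MN|, hence |FE| > r and E lies strictly outside ω. -/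
open EuclideanGeometry Metric Real

/-!
With `M` the midpoint of `XY`, `a = |XY|/2` and `m = |FM|`, Apollonius' theorem gives
`m² + a² = r²`, so `|MN| = r - m < a` because `m, a > 0`. On the other hand, combining the law of
cosines in `XEY` with Apollonius' theorem at `E`, an angle `∠XEY ≤ π/2` forces `|EM| ≥ a`.
-/

section Midpoint

variable {V P : Type*} [NormedAddCommGroup V] [InnerProductSpace ℝ V] [MetricSpace P]
  [NormedAddTorsor V P]

theorem half_dist_le_dist_midpoint_of_angle_le_pi_div_two {X Y E : P}
    (hangle : ∠ X E Y ≤ π / 2) : dist X Y / 2 ≤ dist E (midpoint ℝ X Y) := by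
  have hcos : 0 ≤ cos (∠ X E Y) :=
    cos_nonneg_of_mem_Icc ⟨by linarith [angle_nonneg X E Y, pi_pos], hangle⟩
  have hlaw := dist_sq_eq_dist_sq_add_dist_sq_sub_two_mul_dist_mul_dist_mul_cos_angle X E Y
  have hapollonius := dist_sq_add_dist_sq_eq_two_mul_dist_midpoint_sq_add_half_dist_sq E X Y
  rw [dist_comm E X, dist_comm E Y] at hapollonius
  have hsq : (dist X Y / 2) ^ 2 ≤ dist E (midpoint ℝ X Y) ^ 2 := by
    have hXE := dist_nonneg (x := X) (y := E)
    have hYE := dist_nonneg (x := Y) (y := E)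
    nlinarith [mul_nonneg (mul_nonneg hXE hYE) hcos]
  exact pow_le_pow_iff_left₀ (by positivity) dist_nonneg two_ne_zero |>.mp hsq

theorem dist_midpoint_sq_add_half_dist_sq_eq {F X Y : P} {r : ℝ} (hX : dist F X = r)
    (hY : dist F Y = r) : dist F (midpoint ℝ X Y) ^ 2 + (dist X Y / 2) ^ 2 = r ^ 2 := by
  have := dist_sq_add_dist_sq_eq_two_mul_dist_midpoint_sq_add_half_dist_sq F X Y
  rw [hX, hY] at this
  linarith

end Midpoint

theorem lt_add_of_sq_add_sq_eq {a b c : ℝ} (ha : 0 < a) (hb : 0 < b) (h : a ^ 2 + b ^ 2 = c ^ 2) :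
    c < a + b := by
  nlinarith [mul_pos ha hb]

theorem stmt_14_general (F X Y N E : EuclideanSpace ℝ (Fin 2)) (r : ℝ)
    (hX : dist F X = r) (hY : dist F Y = r) (hXY : X ≠ Y)
    (hN : dist F N = r) (hNbtw : Sbtw ℝ F (midpoint ℝ X Y) N)
    (hEbtw : Sbtw ℝ F (midpoint ℝ X Y) E) (hangle : ∠ X E Y ≤ π / 2) :
    dist (midpoint ℝ X Y) N < dist (midpoint ℝ X Y) E ∧
    r < dist F E ∧ E ∉ Metric.closedBall F r := by
  set M := midpoint ℝ X Y
  have hFM : 0 < dist F M := dist_pos.mpr hNbtw.left_ne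
  have hXY2 : 0 < dist X Y / 2 := by linarith [dist_pos.mpr hXY]
  have hFMN : dist F M + dist M N = r := hN ▸ hNbtw.wbtw.dist_add_dist
  have hFME : dist F M + dist M E = dist F E := hEbtw.wbtw.dist_add_dist
  have hr : r < dist F M + dist X Y / 2 :=
    lt_add_of_sq_add_sq_eq hFM hXY2 (dist_midpoint_sq_add_half_dist_sq_eq hX hY)
  have hME : dist X Y / 2 ≤ dist M E :=
    dist_comm E M ▸ half_dist_le_dist_midpoint_of_angle_le_pi_div_two hangle
  have hMN : dist M N < dist M E := by linarith
  have hFE : r < dist F E := by linarith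
  exact ⟨hMN, hFE, fun hE => (mem_closedBall'.mp hE).not_gt hFE⟩

/-- Let `ω` be the closed disk of radius `r` centered at `F`, `X`, `Y` boundary points with
`|XY| < 2r`, `M` the midpoint of `XY`, `N` the point beyond `M` on the ray from `F` through
`M` with `|FN| = r`. Any point `E` on that ray beyond `M` with `∠XEY ≤ π/2` satisfies
`|ME| > |MN|`, hence `|FE| > r` and `E` lies strictly outside `ω`. -/
theorem stmt_14 (F X Y N E : EuclideanSpace ℝ (Fin 2)) (r : ℝ) (hr : 0 < r)
    (hX : dist F X = r) (hY : dist F Y = r) (hXY : X ≠ Y) (hdiam : dist X Y < 2 * r)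
    (hN : dist F N = r) (hNbtw : Sbtw ℝ F (midpoint ℝ X Y) N)
    (hEbtw : Sbtw ℝ F (midpoint ℝ X Y) E) (hangle : ∠ X E Y ≤ π / 2) :
    dist (midpoint ℝ X Y) N < dist (midpoint ℝ X Y) E ∧
    r < dist F E ∧ E ∉ Metric.closedBall F r :=
  stmt_14_general F X Y N E r hX hY hXY hN hNbtw hEbtw hangle
end

section
/- Let Γ be a circle with marked points A, B, C, D in cyclic order (possibly among other marked points), such that the side disks of arcs AB and CD intersect. Then the side disks of arcs BC and DA are disjoint. -/
/-!
Parametrize by the quarter arcs `α, β, γ, δ` (so `α + β + γ + δ = π / 2`). The side disk of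
arc `AB` has radius `2 r sin α`, and the midpoints of arcs `AB` and `CD` are `2 r sin (α + 2β + γ)`
apart, so both pairs of disks meet iff `sin (α + 2β + γ) ≤ sin α + sin γ` and
`sin (β + 2γ + δ) ≤ sin β + sin δ`. With `s, t` the half sums and `u, v` the half differences
of `(α, γ)` and `(β, δ)`, these two inequalities add up to
`sin u² + sin s cos u + sin v² + sin t cos v ≥ 1`; but each half is strictly smaller than its
value at `u = s`, `v = t`, and those values sum to `1` because `s + t = π / 4`.
-/

open EuclideanGeometry Metric Real

lemma dist_circlePt_of_le (O : EuclideanSpace ℝ (Fin 2)) {r θ φ : ℝ} (hr : 0 ≤ r)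
    (hθφ : θ ≤ φ) (hφθ : φ ≤ θ + 2 * π) :
    dist (circlePt O r φ) (circlePt O r θ) = 2 * r * sin ((φ - θ) / 2) := by
  rw [dist_circlePt, abs_of_nonneg hr,
    abs_of_nonneg (sin_nonneg_of_nonneg_of_le_pi (by linarith) (by linarith))]

lemma sideDisk_eq (O : EuclideanSpace ℝ (Fin 2)) {r a b : ℝ} (hr : 0 ≤ r) (hab : a ≤ b)
    (hba : b ≤ a + 4 * π) :
    sideDisk O r a b = closedBall (circlePt O r ((a + b) / 2)) (2 * r * sin ((b - a) / 4)) := by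
  rw [sideDisk, dist_circlePt_of_le O hr (by linarith) (by linarith)]
  ring_nf

lemma sin_sq_add_sin_mul_cos_lt {s u : ℝ} (hu : |u| < s) (hs : s ≤ π / 4) :
    sin u ^ 2 + sin s * cos u < sin s ^ 2 + sin s * cos s := by
  have hs₀ : 0 ≤ s := (abs_nonneg u).trans hu.le
  have hcos : cos s < cos u := by
    rw [← cos_abs u]
    exact cos_lt_cos_of_nonneg_of_le_pi (abs_nonneg u) (by linarith [pi_pos]) hu
  have hsin_le_cos : sin s ≤ cos s := by
    rw [← cos_pi_div_two_sub]
    exact cos_le_cos_of_nonneg_of_le_pi hs₀ (by linarith [pi_pos]) (by linarith)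
  have hcos_pos : 0 < cos s := cos_pos_of_mem_Ioo ⟨by linarith [pi_pos], by linarith [pi_pos]⟩
  have hfactor : sin s ^ 2 + sin s * cos s - (sin u ^ 2 + sin s * cos u)
      = (cos u - cos s) * (cos u + cos s - sin s) := by
    linear_combination sin_sq_add_cos_sq s - sin_sq_add_cos_sq u
  nlinarith [mul_pos (sub_pos.2 hcos) (by linarith : 0 < cos u + cos s - sin s)]

lemma sin_sq_add_sin_mul_cos_add_eq_one {s t : ℝ} (h : s + t = π / 4) :
    sin s ^ 2 + sin s * cos s + (sin t ^ 2 + sin t * cos t) = 1 := by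
  have h2t : 2 * t = π / 2 - 2 * s := by linarith
  have hcos := cos_pi_div_two_sub (2 * s)
  have hsin := sin_pi_div_two_sub (2 * s)
  rw [← h2t, cos_two_mul', sin_two_mul] at hcos hsin
  linear_combination (-1 / 2 : ℝ) * hcos + (1 / 2 : ℝ) * hsin
    + (1 / 2 : ℝ) * sin_sq_add_cos_sq s + (1 / 2 : ℝ) * sin_sq_add_cos_sq t

theorem sin_add_sin_lt_sin_of_sin_le {α β γ δ : ℝ} (hα : 0 < α) (hβ : 0 < β) (hγ : 0 < γ)
    (hδ : 0 < δ) (hsum : α + β + γ + δ = π / 2)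
    (h : sin (α + 2 * β + γ) ≤ sin α + sin γ) :
    sin β + sin δ < sin (β + 2 * γ + δ) := by
  by_contra! h'
  have e₁ : sin (α + 2 * β + γ) = 1 - 2 * sin ((β - δ) / 2) ^ 2 := by
    rw [show α + 2 * β + γ = π / 2 - 2 * ((δ - β) / 2) by linarith, sin_pi_div_two_sub,
      cos_two_mul_eq_one_sub, show (δ - β) / 2 = -((β - δ) / 2) by ring, sin_neg, neg_sq]
  have e₂ : sin (β + 2 * γ + δ) = 1 - 2 * sin ((α - γ) / 2) ^ 2 := by
    rw [show β + 2 * γ + δ = π / 2 - 2 * ((α - γ) / 2) by linarith, sin_pi_div_two_sub,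
      cos_two_mul_eq_one_sub]
  rw [e₁, sin_add_sin] at h
  rw [e₂, sin_add_sin] at h'
  have hαγ := sin_sq_add_sin_mul_cos_lt (s := (α + γ) / 2) (u := (α - γ) / 2)
    (abs_lt.2 ⟨by linarith, by linarith⟩) (by linarith)
  have hβδ := sin_sq_add_sin_mul_cos_lt (s := (β + δ) / 2) (u := (β - δ) / 2)
    (abs_lt.2 ⟨by linarith, by linarith⟩) (by linarith)
  have hone := sin_sq_add_sin_mul_cos_add_eq_one
    (s := (α + γ) / 2) (t := (β + δ) / 2) (by linarith)
  linarith

/-- If `A, B, C, D` are in cyclic order on a circle and the side disks of arcs `AB` and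
`CD` intersect, then the side disks of arcs `BC` and `DA` are disjoint. -/
theorem stmt_19 (O : EuclideanSpace ℝ (Fin 2)) (r a b c d : ℝ) (hr : 0 < r)
    (hab : a < b) (hbc : b < c) (hcd : c < d) (hda : d < a + 2 * π)
    (h : (sideDisk O r a b ∩ sideDisk O r c d).Nonempty) :
    sideDisk O r b c ∩ sideDisk O r d (a + 2 * π) = ∅ := by
  have hπ := pi_pos
  rw [sideDisk_eq O hr.le hab.le (by linarith), sideDisk_eq O hr.le hcd.le (by linarith)] at h
  rw [sideDisk_eq O hr.le hbc.le (by linarith), sideDisk_eq O hr.le hda.le (by linarith)]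
  have hAC := dist_le_add_of_nonempty_closedBall_inter_closedBall h
  rw [dist_comm, dist_circlePt_of_le O hr.le (by linarith) (by linarith)] at hAC
  have hsin := sin_add_sin_lt_sin_of_sin_le (α := (b - a) / 4) (β := (c - b) / 4)
    (γ := (d - c) / 4) (δ := (a + 2 * π - d) / 4) (by linarith) (by linarith) (by linarith)
    (by linarith) (by ring) <| by
      rw [show (b - a) / 4 + 2 * ((c - b) / 4) + (d - c) / 4 = ((c + d) / 2 - (a + b) / 2) / 2
        by ring]
      nlinarith
  refine Set.disjoint_iff_inter_eq_empty.mp (closedBall_disjoint_closedBall ?_)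
  rw [dist_comm, dist_circlePt_of_le O hr.le (by linarith) (by linarith),
    show ((d + (a + 2 * π)) / 2 - (b + c) / 2) / 2
      = (c - b) / 4 + 2 * ((d - c) / 4) + (a + 2 * π - d) / 4 by ring]
  nlinarith
end
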